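/- arXiv:2311.14549 — 6 statements merged into one kernel-verified Lean document; each statement's English description precedes it below -/
import Mathlib

section
/- Let (S, ⊕, ⊙, 𝟘, 𝟙) be a commutative semiring. For every word w = [a_1]⋯[a_p] with p ≥ 1 and every d-dimensional S-valued time series x of length T, the running iterated sum satisfies Itsum^S_w(x) = CS^S_0( x^{⊙[a_p]} ⊙ CS^S_1( x^{⊙[a_{p−1}]} ⊙ CS^S_1( ⋯ x^{⊙[a_2]} ⊙ CS^S_1( x^{⊙[a_1]} ) ⋯ ) ) ), where x^{⊙[a]} denotes the S-valued series t ↦ x_t^{⊙[a]} and ⊙ between two series is the entrywise product. -/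
/-- The `⊙`-monomial `x_t^{⊙[a]} = ⨀_j (x_t^{(j)})^{⊙ a_j}` in a commutative semiring. -/
def monoS {S : Type*} [CommSemiring S] {d : ℕ} (x : ℕ → Fin d → S) (t : ℕ)
    (a : Fin d → ℕ) : S :=
  ∏ j, (x t j) ^ (a j)

/-- The running iterated sum over a commutative semiring,
`Itsum^S_w(x)_t = ⨁_{s < t_1 < ⋯ < t_p ≤ t} x_{t_1}^{⊙[a_1]} ⊙ ⋯ ⊙ x_{t_p}^{⊙[a_p]}`
(with starting point `s`; the paper's `Itsum^S_w(x)_t` is `issS x w 0 t`). -/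
def issS {S : Type*} [CommSemiring S] {d : ℕ} (x : ℕ → Fin d → S) :
    List (Fin d → ℕ) → ℕ → ℕ → S
  | [], _, _ => 1
  | a :: w, s, t => ∑ i ∈ Finset.Ioc s t, monoS x i a * issS x w i t

/-- The shifted cumulative sum `CS^S_r(z)_s`, equal to `𝟘` for `s ≤ r` and to
`⨁_{j=1}^{s−r} z_j` for `s > r`. -/
def csS {S : Type*} [CommSemiring S] (r : ℕ) (z : ℕ → S) : ℕ → S :=
  fun s => ∑ j ∈ Finset.Icc 1 (s - r), z j

/-- The nested expression `x^{⊙[a_p]} ⊙ CS^S_1( x^{⊙[a_{p−1}]} ⊙ ⋯ ⊙ CS^S_1(x^{⊙[a_1]}) ⋯)`,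
where the input list is given in reversed order `[a_p, a_{p−1}, …, a_1]`. -/
def nestS {S : Type*} [CommSemiring S] {d : ℕ} (x : ℕ → Fin d → S) :
    List (Fin d → ℕ) → ℕ → S
  | [] => fun _ => 1
  | [a] => fun t => monoS x t a
  | a :: b :: w => fun t => monoS x t a * csS 1 (nestS x (b :: w)) t

lemma issS_append {S : Type*} [CommSemiring S] {d : ℕ} (x : ℕ → Fin d → S)
    (a : Fin d → ℕ) :
    ∀ (w : List (Fin d → ℕ)) (s t : ℕ),
      issS x (w ++ [a]) s t = ∑ j ∈ Finset.Ioc s t, monoS x j a * issS x w s (j - 1)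
  | [], s, t => by simp [issS]
  | b :: w', s, t => by
    simp only [List.cons_append, issS]
    calc ∑ i ∈ Finset.Ioc s t, monoS x i b * issS x (w' ++ [a]) i t
        = ∑ i ∈ Finset.Ioc s t, ∑ j ∈ Finset.Ioc i t,
            monoS x j a * (monoS x i b * issS x w' i (j - 1)) := by
          refine Finset.sum_congr rfl fun i _ => ?_
          rw [issS_append x a w', Finset.mul_sum]
          exact Finset.sum_congr rfl fun j _ => by ring
      _ = ∑ j ∈ Finset.Ioc s t, ∑ i ∈ Finset.Ioc s (j - 1),
            monoS x j a * (monoS x i b * issS x w' i (j - 1)) := by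
          apply Finset.sum_comm'
          intro i j
          simp only [Finset.mem_Ioc]
          omega
      _ = ∑ j ∈ Finset.Ioc s t, monoS x j a *
            ∑ i ∈ Finset.Ioc s (j - 1), monoS x i b * issS x w' i (j - 1) := by
          simp [Finset.mul_sum]

lemma issS_rev_nest {S : Type*} [CommSemiring S] {d : ℕ} (x : ℕ → Fin d → S) :
    ∀ (l : List (Fin d → ℕ)), l ≠ [] → ∀ t : ℕ,
      issS x l.reverse 0 t = ∑ j ∈ Finset.Ioc 0 t, nestS x l j
  | [], h, _ => absurd rfl h
  | [a], _, t => by simp [issS, nestS]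
  | a :: b :: w, _, t => by
    rw [List.reverse_cons, issS_append]
    refine Finset.sum_congr rfl fun j _ => ?_
    rw [issS_rev_nest x (b :: w) (by simp)]
    simp [nestS, csS, ← Finset.Icc_add_one_left_eq_Ioc]

/-- Dynamic-programming formula for the iterated sum over a commutative semiring:
for a word `w = [a_1]⋯[a_p]`, `p ≥ 1`, and an `S`-valued time series of length `T`,
`Itsum^S_w(x) = CS^S_0( x^{⊙[a_p]} ⊙ CS^S_1( x^{⊙[a_{p−1}]} ⊙ ⋯ ⊙ CS^S_1(x^{⊙[a_1]}) ⋯ ))`. -/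
theorem issS_eq_nested_cs {S : Type*} [CommSemiring S] {d T : ℕ} (x : ℕ → Fin d → S)
    (w : List (Fin d → ℕ)) (hw : w ≠ [])
    (hletters : ∀ a ∈ w, ∃ j, a j ≠ 0)
    (t : ℕ) (ht1 : 1 ≤ t) (htT : t ≤ T) :
    issS x w 0 t = csS 0 (nestS x w.reverse) t := by
  have h := issS_rev_nest x w.reverse (by simpa using hw) t
  rw [List.reverse_reverse] at h
  rw [h, csS]
  simp [← Finset.Icc_add_one_left_eq_Ioc]
end

section
/- Let (S, ⊕, ⊙, 𝟘, 𝟙) be a commutative semiring. The iterated sums over S are invariant to insertion of the zero element: let x be a d-dimensional S-valued time series of length T, let 1 ≤ t_0 ≤ T+1, and let y be the S-valued time series of length T+1 defined by y_i = x_i for i < t_0, y_{t_0} = (𝟘,…,𝟘) ∈ S^d, and y_i = x_{i−1} for i > t_0. Then for every word w (all of whose letters have at least one nonzero entry), Itsum^S_w(x)_T = Itsum^S_w(y)_{T+1}. -/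
lemma issS_shift {S : Type*} [CommSemiring S] {d T : ℕ}
    (x y : ℕ → Fin d → S) (t₀ : ℕ) (ht₀1 : 1 ≤ t₀)
    (hy_gt : ∀ i, t₀ < i → y i = x (i - 1)) :
    ∀ (w : List (Fin d → ℕ)) (s : ℕ), t₀ ≤ s →
      issS y w s (T + 1) = issS x w (s - 1) T := by
  intro w
  induction w with
  | nil => intro s hs; rfl
  | cons a w ih =>
    intro s hs
    have hs1 : 1 ≤ s := le_trans ht₀1 hs
    simp only [issS]
    refine Finset.sum_nbij' (fun i => i - 1) (fun i => i + 1) ?_ ?_ ?_ ?_ ?_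
    · intro i hi
      simp only [Finset.mem_Ioc] at *
      omega
    · intro i hi
      simp only [Finset.mem_Ioc] at *
      omega
    · intro i hi
      simp only [Finset.mem_Ioc] at hi
      omega
    · intro i hi
      simp only [Finset.mem_Ioc] at hi
      omega
    · intro i hi
      simp only [Finset.mem_Ioc] at hi
      simp only [monoS, hy_gt i (by omega : t₀ < i), ih i (by omega : t₀ ≤ i)]

lemma issS_zero_ins {S : Type*} [CommSemiring S] {d T : ℕ}
    (x y : ℕ → Fin d → S) (t : ℕ) (ht2 : t ≤ T)
    (hy_lt : ∀ i, i < t + 1 → y i = x i)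
    (hy_eq : y (t + 1) = 0)
    (hy_gt : ∀ i, t + 1 < i → y i = x (i - 1)) :
    ∀ (w : List (Fin d → ℕ)), (∀ a ∈ w, ∃ j, a j ≠ 0) → ∀ s, s ≤ t →
      issS y w s (T + 1) = issS x w s T := by
  intro w
  induction w with
  | nil => intro _ s _; rfl
  | cons a w ih =>
    intro hw s hst
    have ha : ∃ j, a j ≠ 0 := hw a (by simp)
    have hw' : ∀ b ∈ w, ∃ j, b j ≠ 0 := fun b hb => hw b (by simp [hb])
    simp only [issS]
    rw [← Finset.sum_Ioc_consecutive _ (by omega : s ≤ t + 1) (by omega : t + 1 ≤ T + 1),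
        ← Finset.sum_Ioc_consecutive _ hst ht2,
        Finset.sum_Ioc_succ_top hst]
    have hF : monoS y (t + 1) a * issS y w (t + 1) (T + 1) = 0 := by
      obtain ⟨j, hj⟩ := ha
      have hm : monoS y (t + 1) a = 0 :=
        Finset.prod_eq_zero (Finset.mem_univ j)
          (by rw [hy_eq]; simp [zero_pow hj])
      rw [hm, zero_mul]
    have h1 : ∑ i ∈ Finset.Ioc s t, monoS y i a * issS y w i (T + 1)
        = ∑ i ∈ Finset.Ioc s t, monoS x i a * issS x w i T := by
      refine Finset.sum_congr rfl fun i hi => ?_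
      simp only [Finset.mem_Ioc] at hi
      simp only [monoS, hy_lt i (by omega), ih hw' i (by omega)]
    have h2 : ∑ i ∈ Finset.Ioc (t + 1) (T + 1), monoS y i a * issS y w i (T + 1)
        = ∑ i ∈ Finset.Ioc t T, monoS x i a * issS x w i T := by
      have := issS_shift (T := T) x y (t + 1) (by omega) hy_gt (a :: w) (t + 1) le_rfl
      simpa [issS] using this
    rw [hF, add_zero, h1, h2]


/-- Invariance of iterated sums over a commutative semiring to insertion of the zero
element: if `y` of length `T+1` is obtained from `x` of length `T` by inserting the
value `(𝟘,…,𝟘) ∈ S^d` at position `t_0` (`1 ≤ t_0 ≤ T+1`), then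
`Itsum^S_w(x)_T = Itsum^S_w(y)_{T+1}` for every word `w` all of whose letters have at
least one nonzero entry. -/
theorem issS_invariant_zero_insertion {S : Type*} [CommSemiring S] {d T : ℕ}
    (x y : ℕ → Fin d → S) (t₀ : ℕ)
    (ht₀1 : 1 ≤ t₀) (ht₀2 : t₀ ≤ T + 1)
    (hy_lt : ∀ i, i < t₀ → y i = x i)
    (hy_eq : y t₀ = 0)
    (hy_gt : ∀ i, t₀ < i → y i = x (i - 1))
    (w : List (Fin d → ℕ)) (hletters : ∀ a ∈ w, ∃ j, a j ≠ 0) :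
    issS x w 0 T = issS y w 0 (T + 1) := by
  obtain ⟨t, rfl⟩ : ∃ t, t₀ = t + 1 := ⟨t₀ - 1, by omega⟩
  exact (issS_zero_ins x y t (by omega) hy_lt hy_eq hy_gt w hletters 0 (by omega)).symm
end

section
/- Collapse of non-strict arctic iterated sums, example [1][1²][23] = [1³][23]: for every 3-dimensional real time series x of length T ≥ 1, max_{1 ≤ t_1 ≤ t_2 ≤ t_3 ≤ T} ( x_{t_1}^{(1)} + 2 x_{t_2}^{(1)} + x_{t_3}^{(2)} + x_{t_3}^{(3)} ) = max_{1 ≤ t_1 ≤ t_2 ≤ T} ( 3 x_{t_1}^{(1)} + x_{t_2}^{(2)} + x_{t_2}^{(3)} ). -/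
/-- Collapse of non-strict arctic iterated sums, example `[1][1²][23] = [1³][23]`:
for every 3-dimensional real time series `x` of length `T ≥ 1`,
`max_{1 ≤ t_1 ≤ t_2 ≤ t_3 ≤ T} ( x_{t_1}^{(1)} + 2 x_{t_2}^{(1)} + x_{t_3}^{(2)} + x_{t_3}^{(3)} )
 = max_{1 ≤ t_1 ≤ t_2 ≤ T} ( 3 x_{t_1}^{(1)} + x_{t_2}^{(2)} + x_{t_2}^{(3)} )`. -/
theorem arctic_nonstrict_collapse_example (T : ℕ) (hT : 1 ≤ T)
    (x : ℕ → Fin 3 → ℝ) :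
    sSup {v : ℝ | ∃ t₁ t₂ t₃ : ℕ, 1 ≤ t₁ ∧ t₁ ≤ t₂ ∧ t₂ ≤ t₃ ∧ t₃ ≤ T ∧
        v = x t₁ 0 + 2 * x t₂ 0 + x t₃ 1 + x t₃ 2}
      = sSup {v : ℝ | ∃ t₁ t₂ : ℕ, 1 ≤ t₁ ∧ t₁ ≤ t₂ ∧ t₂ ≤ T ∧
          v = 3 * x t₁ 0 + x t₂ 1 + x t₂ 2} := by
  set A : Set ℝ := {v : ℝ | ∃ t₁ t₂ t₃ : ℕ, 1 ≤ t₁ ∧ t₁ ≤ t₂ ∧ t₂ ≤ t₃ ∧ t₃ ≤ T ∧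
        v = x t₁ 0 + 2 * x t₂ 0 + x t₃ 1 + x t₃ 2} with hA
  set B : Set ℝ := {v : ℝ | ∃ t₁ t₂ : ℕ, 1 ≤ t₁ ∧ t₁ ≤ t₂ ∧ t₂ ≤ T ∧
          v = 3 * x t₁ 0 + x t₂ 1 + x t₂ 2} with hB
  have hAfin : A.Finite := by
    apply Set.Finite.subset (Set.Finite.image
      (f := fun p : ℕ × ℕ × ℕ => x p.1 0 + 2 * x p.2.1 0 + x p.2.2 1 + x p.2.2 2)
      (Set.Finite.prod (Set.finite_Icc 1 T)
        (Set.Finite.prod (Set.finite_Icc 1 T) (Set.finite_Icc 1 T))))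
    rintro v ⟨t₁, t₂, t₃, h1, h2, h3, h4, rfl⟩
    exact ⟨(t₁, t₂, t₃), ⟨⟨h1, h2.trans (h3.trans h4)⟩,
      ⟨h1.trans h2, h3.trans h4⟩, ⟨h1.trans (h2.trans h3), h4⟩⟩, rfl⟩
  have hBfin : B.Finite := by
    apply Set.Finite.subset (Set.Finite.image
      (f := fun p : ℕ × ℕ => 3 * x p.1 0 + x p.2 1 + x p.2 2)
      (Set.Finite.prod (Set.finite_Icc 1 T) (Set.finite_Icc 1 T)))
    rintro v ⟨t₁, t₂, h1, h2, h3, rfl⟩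
    exact ⟨(t₁, t₂), ⟨⟨h1, h2.trans h3⟩, ⟨h1.trans h2, h3⟩⟩, rfl⟩
  have hAne : A.Nonempty := ⟨_, 1, 1, 1, le_refl 1, le_refl 1, le_refl 1, hT, rfl⟩
  have hBne : B.Nonempty := ⟨_, 1, 1, le_refl 1, le_refl 1, hT, rfl⟩
  apply le_antisymm
  · apply csSup_le hAne
    rintro v ⟨t₁, t₂, t₃, h1, h2, h3, h4, rfl⟩
    rcases le_total (x t₁ 0) (x t₂ 0) with h | h
    · calc x t₁ 0 + 2 * x t₂ 0 + x t₃ 1 + x t₃ 2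
          ≤ 3 * x t₂ 0 + x t₃ 1 + x t₃ 2 := by nlinarith
        _ ≤ sSup B := le_csSup hBfin.bddAbove
            ⟨t₂, t₃, h1.trans h2, h3, h4, rfl⟩
    · calc x t₁ 0 + 2 * x t₂ 0 + x t₃ 1 + x t₃ 2
          ≤ 3 * x t₁ 0 + x t₃ 1 + x t₃ 2 := by nlinarith
        _ ≤ sSup B := le_csSup hBfin.bddAbove
            ⟨t₁, t₃, h1, h2.trans h3, h4, rfl⟩
  · apply csSup_le hBne
    rintro v ⟨t₁, t₂, h1, h2, h3, rfl⟩
    have : (3 : ℝ) * x t₁ 0 + x t₂ 1 + x t₂ 2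
        = x t₁ 0 + 2 * x t₁ 0 + x t₂ 1 + x t₂ 2 := by ring
    rw [this]
    exact le_csSup hAfin.bddAbove ⟨t₁, t₁, t₂, h1, le_refl _, h2, h3, rfl⟩
end

section
/- Time-warping invariance of non-strict arctic iterated sums: let x be a d-dimensional real time series of length T ≥ 1, let 1 ≤ t_0 ≤ T, and let y be the stuttered series of length T+1 defined by y_i = x_i for i ≤ t_0 and y_i = x_{i−1} for i > t_0. Then for every p ≥ 1 and all extended letters a_1,…,a_p ∈ ℤ^d, max_{1 ≤ t_1 ≤ ⋯ ≤ t_p ≤ T+1} Σ_{k=1}^p ⟨a_k, y_{t_k}⟩ = max_{1 ≤ t_1 ≤ ⋯ ≤ t_p ≤ T} Σ_{k=1}^p ⟨a_k, x_{t_k}⟩, where ⟨a, v⟩ := Σ_{j=1}^d a_j v^{(j)}. -/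
/-- Time-warping invariance of non-strict arctic iterated sums: if `y` of length
`T+1` is obtained from `x` of length `T ≥ 1` by stuttering (repeating the value at
position `t_0`, `1 ≤ t_0 ≤ T`, once), then for every `p ≥ 1` and all extended
letters `a_1,…,a_p ∈ ℤ^d`,
`max_{1 ≤ t_1 ≤ ⋯ ≤ t_p ≤ T+1} Σ_k ⟨a_k, y_{t_k}⟩ = max_{1 ≤ t_1 ≤ ⋯ ≤ t_p ≤ T} Σ_k ⟨a_k, x_{t_k}⟩`,
where `⟨a, v⟩ = Σ_j a_j v^{(j)}`. -/
theorem arctic_nonstrict_time_warping_invariant (d T : ℕ) (hT : 1 ≤ T)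
    (x y : ℕ → Fin d → ℝ) (t₀ : ℕ) (ht₀1 : 1 ≤ t₀) (ht₀2 : t₀ ≤ T)
    (hy_le : ∀ i, i ≤ t₀ → y i = x i)
    (hy_gt : ∀ i, t₀ < i → y i = x (i - 1))
    (p : ℕ) (hp : 1 ≤ p) (a : Fin p → Fin d → ℤ) :
    sSup {v : ℝ | ∃ t : Fin p → ℕ, Monotone t ∧ (∀ k, 1 ≤ t k ∧ t k ≤ T + 1) ∧
        v = ∑ k, ∑ j, (a k j : ℝ) * y (t k) j}
      = sSup {v : ℝ | ∃ t : Fin p → ℕ, Monotone t ∧ (∀ k, 1 ≤ t k ∧ t k ≤ T) ∧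
          v = ∑ k, ∑ j, (a k j : ℝ) * x (t k) j} := by
  congr 1
  ext v
  constructor
  · rintro ⟨t, hmono, hbd, rfl⟩
    refine ⟨fun k => if t k ≤ t₀ then t k else t k - 1, ?_, ?_, ?_⟩
    · intro k l hkl
      have h := hmono hkl
      by_cases hk : t k ≤ t₀ <;> by_cases hl : t l ≤ t₀ <;> simp [hk, hl] <;> omega
    · intro k
      have := hbd k
      by_cases hk : t k ≤ t₀ <;> simp [hk] <;> omega
    · refine Finset.sum_congr rfl fun k _ => Finset.sum_congr rfl fun j _ => ?_
      by_cases hk : t k ≤ t₀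
      · simp [hk, hy_le _ hk]
      · simp only [hk, if_false]
        rw [hy_gt _ (by omega)]
  · rintro ⟨t, hmono, hbd, rfl⟩
    refine ⟨fun k => if t k ≤ t₀ then t k else t k + 1, ?_, ?_, ?_⟩
    · intro k l hkl
      have h := hmono hkl
      by_cases hk : t k ≤ t₀ <;> by_cases hl : t l ≤ t₀ <;> simp [hk, hl] <;> omega
    · intro k
      have := hbd k
      by_cases hk : t k ≤ t₀ <;> simp [hk] <;> omega
    · refine Finset.sum_congr rfl fun k _ => Finset.sum_congr rfl fun j _ => ?_
      by_cases hk : t k ≤ t₀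
      · simp [hk, hy_le _ hk]
      · simp only [hk, if_false]
        rw [hy_gt _ (by omega)]
        simp
end

section
/- Dynamic-programming formula for exponentially weighted iterated sums over ℝ: let x be a d-dimensional real time series of length T, let w = [a_1]…[a_p] be a word (p ≥ 1), let g : {1,…,T} → ℝ, and let α_1,…,α_p ≥ 0 with the convention α_0 := 0. Define the modified series y^{(k)}_s := e^{(α_k − α_{k−1}) g(s)} x_s^{[a_k]} for k = 1,…,p and ν_s := e^{−α_p g(s)}. Then for every 1 ≤ t ≤ T, Σ_{0 < t_1 < ⋯ < t_p ≤ t} e^{α_1(g(t_1)−g(t_2)) + ⋯ + α_{p−1}(g(t_{p−1})−g(t_p)) + α_p(g(t_p)−g(t))} · x_{t_1}^{[a_1]} ⋯ x_{t_p}^{[a_p]} = ν_t · CS_0( y^{(p)} · CS_1( y^{(p−1)} · CS_1( ⋯ y^{(2)} · CS_1( y^{(1)} ) ⋯ ) ) )_t, where · between series is entrywise multiplication. -/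
/-- The monomial `x_t^{[a]} = ∏_j (x_t^{(j)})^{a_j}`. -/
def mono {d : ℕ} (x : ℕ → Fin d → ℝ) (t : ℕ) (a : Fin d → ℕ) : ℝ :=
  ∏ j, (x t j) ^ (a j)

/-- The shifted cumulative sum `CS_r(z)_s`, equal to `0` for `s ≤ r` and to
`Σ_{j=1}^{s−r} z_j` for `s > r`. -/
def cs (r : ℕ) (z : ℕ → ℝ) : ℕ → ℝ :=
  fun s => ∑ j ∈ Finset.Icc 1 (s - r), z j

/-- The nested expression `z_p ⊙ CS_1( z_{p−1} ⊙ ⋯ ⊙ CS_1(z_1) ⋯)`, where the input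
list is given in reversed order `[z_p, z_{p−1}, …, z_1]` and `⊙` is the entrywise
product of series. -/
def nestL : List (ℕ → ℝ) → ℕ → ℝ
  | [] => fun _ => 1
  | [z] => z
  | z :: z' :: w => fun t => z t * cs 1 (nestL (z' :: w)) t

/-!
Summation by parts, using `α_0 = 0`, rewrites the weight of `t_1 < ⋯ < t_p` as
`e^{-α_p g(t)} ∏_k e^{(α_k - α_{k-1}) g(t_k)}`, so the weighted sum is `ν_t` times the plain
iterated sum of `y^{(1)}, …, y^{(p)}`. Splitting off the last time `t_p = s`, that iterated sum
up to `t` is `Σ_{s ≤ t} y^{(p)}_s` times the iterated sum of the first `p - 1` series up to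
`s - 1`, which is the recursion defining the nested `CS_1` expression.
-/

open Finset

theorem Fin.strictMono_snoc_iff {α : Type*} [Preorder α] {n : ℕ} {f : Fin n → α} {x : α} :
    StrictMono (Fin.snoc f x : Fin (n + 1) → α) ↔ StrictMono f ∧ ∀ i, f i < x := by
  simp [← Fin.insertNth_last', Fin.strictMono_insertNth_iff, Fin.castSucc_lt_last]

theorem cs_apply_eq_sum_Ioc (r : ℕ) (z : ℕ → ℝ) (t : ℕ) :
    cs r z t = ∑ s ∈ Ioc 0 (t - r), z s := by
  rw [cs, ← Icc_add_one_left_eq_Ioc, zero_add]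

theorem nestL_reverse_ofFn_succ_succ {n : ℕ} (z : Fin (n + 2) → ℕ → ℝ) (t : ℕ) :
    nestL (List.ofFn z).reverse t =
      z (Fin.last _) t *
        cs 1 (nestL (List.ofFn fun k : Fin (n + 1) => z k.castSucc).reverse) t := by
  obtain ⟨z', w, hw⟩ :
      ∃ z' w, (List.ofFn fun k : Fin (n + 1) => z k.castSucc).reverse = z' :: w :=
    List.exists_cons_of_ne_nil (by simp)
  rw [List.ofFn_succ', List.concat_eq_append, List.reverse_append, hw]
  rfl

def increasingTuples (n t : ℕ) : Finset (Fin n → ℕ) :=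
  {tv ∈ Fintype.piFinset fun _ : Fin n => Ioc 0 t | StrictMono tv}

theorem increasingTuples_zero (t : ℕ) : increasingTuples 0 t = univ := by
  ext tv
  simp [increasingTuples, Subsingleton.strictMono]

theorem snoc_mem_increasingTuples_iff {n t s : ℕ} {f : Fin n → ℕ} :
    Fin.snoc f s ∈ increasingTuples (n + 1) t ↔
      s ∈ Ioc 0 t ∧ f ∈ increasingTuples n (s - 1) := by
  simp only [increasingTuples, mem_filter, Fintype.mem_piFinset, Fin.forall_fin_succ',
    Fin.snoc_castSucc, Fin.snoc_last, Fin.strictMono_snoc_iff, mem_Ioc]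
  constructor
  · rintro ⟨⟨hf, hs⟩, hmono, hlt⟩
    exact ⟨hs, fun i => ⟨(hf i).1, by have := hlt i; omega⟩, hmono⟩
  · rintro ⟨hs, hf, hmono⟩
    exact ⟨⟨fun i => ⟨(hf i).1, by have := (hf i).2; omega⟩, hs⟩, hmono,
      fun i => by have := hf i; omega⟩

theorem sum_increasingTuples_succ {M : Type*} [AddCommMonoid M] (n t : ℕ)
    (F : (Fin (n + 1) → ℕ) → M) :
    ∑ tv ∈ increasingTuples (n + 1) t, F tv =
      ∑ s ∈ Ioc 0 t, ∑ f ∈ increasingTuples n (s - 1), F (Fin.snoc f s) := by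
  rw [sum_sigma']
  refine sum_nbij' (fun tv => ⟨tv (Fin.last n), Fin.init tv⟩) (fun x => Fin.snoc x.2 x.1)
    ?_ ?_ ?_ ?_ ?_
  · intro tv htv
    rw [← Fin.snoc_init_self tv, snoc_mem_increasingTuples_iff] at htv
    simpa using htv
  · rintro ⟨s, f⟩ h
    simpa [snoc_mem_increasingTuples_iff] using h
  · intro tv _
    exact Fin.snoc_init_self tv
  · rintro ⟨s, f⟩ _
    simp
  · intro tv _
    simp

theorem sum_increasingTuples_prod_succ (n t : ℕ) (z : Fin (n + 1) → ℕ → ℝ) :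
    ∑ tv ∈ increasingTuples (n + 1) t, ∏ k, z k (tv k) =
      ∑ s ∈ Ioc 0 t, z (Fin.last n) s *
        ∑ f ∈ increasingTuples n (s - 1), ∏ k : Fin n, z k.castSucc (f k) := by
  simp [sum_increasingTuples_succ, Fin.prod_univ_castSucc, mul_sum, mul_comm]

theorem nestL_reverse_ofFn (n : ℕ) (z : Fin (n + 1) → ℕ → ℝ) (t : ℕ) :
    nestL (List.ofFn z).reverse t =
      z (Fin.last n) t *
        ∑ f ∈ increasingTuples n (t - 1), ∏ k : Fin n, z k.castSucc (f k) := by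
  induction n generalizing t with
  | zero => simp [increasingTuples_zero, nestL]
  | succ n ih =>
    rw [nestL_reverse_ofFn_succ_succ, cs_apply_eq_sum_Ioc, sum_increasingTuples_prod_succ]
    simp only [ih]

theorem sum_increasingTuples_prod_eq_cs_nestL (n t : ℕ) (z : Fin (n + 1) → ℕ → ℝ) :
    ∑ tv ∈ increasingTuples (n + 1) t, ∏ k, z k (tv k) =
      cs 0 (nestL (List.ofFn z).reverse) t := by
  simp only [sum_increasingTuples_prod_succ, cs_apply_eq_sum_Ioc, nestL_reverse_ofFn,
    Nat.sub_zero]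

theorem sum_mul_sub_next_eq {n : ℕ} (β : ℕ → ℝ) (hβ : β 0 = 0) (u : Fin n → ℝ) (c : ℝ) :
    ∑ k : Fin n, β (k + 1) * (u k - if h : k.1 + 1 < n then u ⟨k + 1, h⟩ else c) =
      ∑ k : Fin n, (β (k + 1) - β k) * u k - β n * c := by
  cases n with
  | zero => simp [hβ]
  | succ n =>
    have hnext :
        ∑ k : Fin (n + 1), β (k + 1) * (if h : k.1 + 1 < n + 1 then u ⟨k + 1, h⟩ else c) =
          ∑ k : Fin (n + 1), β k * u k + β (n + 1) * c := by
      rw [Fin.sum_univ_castSucc, Fin.sum_univ_succ]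
      simp [hβ, Fin.castSucc, Fin.succ]
    simp only [mul_sub, sub_mul, sum_sub_distrib, hnext]
    ring

open scoped Classical in
theorem weighted_iss_dynamic_programming_general (d p : ℕ) (hp : 1 ≤ p)
    (x : ℕ → Fin d → ℝ) (a : Fin p → Fin d → ℕ)
    (g : ℕ → ℝ) (α : ℕ → ℝ) (hα0 : α 0 = 0)
    (y : Fin p → ℕ → ℝ)
    (hy : ∀ (k : Fin p) (s : ℕ),
      y k s = Real.exp ((α (k.1 + 1) - α k.1) * g s) * mono x s (a k))
    (t : ℕ) :
    ∑ tv ∈ (Fintype.piFinset fun _ : Fin p => Finset.Ioc 0 t).filter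
        (fun tv => StrictMono tv),
      Real.exp (∑ k : Fin p, α (k.1 + 1) *
          (g (tv k) - if h : k.1 + 1 < p then g (tv ⟨k.1 + 1, h⟩) else g t)) *
        ∏ k, mono x (tv k) (a k)
      = Real.exp (-(α p) * g t) * cs 0 (nestL ((List.ofFn y).reverse)) t := by
  obtain ⟨n, rfl⟩ : ∃ n, p = n + 1 := ⟨p - 1, by omega⟩
  have hsummand (tv : Fin (n + 1) → ℕ) :
      Real.exp (∑ k : Fin (n + 1), α (k.1 + 1) *
          (g (tv k) - if h : k.1 + 1 < n + 1 then g (tv ⟨k.1 + 1, h⟩) else g t)) *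
        ∏ k, mono x (tv k) (a k) = Real.exp (-(α (n + 1)) * g t) * ∏ k, y k (tv k) := by
    simp only [sum_mul_sub_next_eq α hα0 (fun k => g (tv k)) (g t), hy, prod_mul_distrib,
      ← Real.exp_sum, ← mul_assoc, ← Real.exp_add]
    congr 2
    ring
  simp only [hsummand, ← mul_sum]
  exact congrArg _ (sum_increasingTuples_prod_eq_cs_nestL n t y)

open scoped Classical in
/-- Dynamic-programming formula for exponentially weighted iterated sums over ℝ:
with `α_0 := 0`, `α_1,…,α_p ≥ 0`, modified series
`y^{(k)}_s := e^{(α_k − α_{k−1}) g(s)} x_s^{[a_k]}` and `ν_s := e^{−α_p g(s)}`, for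
every `1 ≤ t ≤ T` the weighted iterated sum
`Σ_{0 < t_1 < ⋯ < t_p ≤ t} e^{α_1(g(t_1)−g(t_2)) + ⋯ + α_p(g(t_p)−g(t))} x_{t_1}^{[a_1]} ⋯ x_{t_p}^{[a_p]}`
equals `ν_t · CS_0( y^{(p)} · CS_1( y^{(p−1)} · ⋯ · CS_1( y^{(1)} ) ⋯ ) )_t`. -/
theorem weighted_iss_dynamic_programming (d T p : ℕ) (hp : 1 ≤ p)
    (x : ℕ → Fin d → ℝ) (a : Fin p → Fin d → ℕ)
    (ha : ∀ k, ∃ j, a k j ≠ 0)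
    (g : ℕ → ℝ) (α : ℕ → ℝ) (hα0 : α 0 = 0)
    (hα : ∀ k, 1 ≤ k → k ≤ p → 0 ≤ α k)
    (y : Fin p → ℕ → ℝ)
    (hy : ∀ (k : Fin p) (s : ℕ),
      y k s = Real.exp ((α (k.1 + 1) - α k.1) * g s) * mono x s (a k))
    (t : ℕ) (ht1 : 1 ≤ t) (htT : t ≤ T) :
    ∑ tv ∈ (Fintype.piFinset fun _ : Fin p => Finset.Ioc 0 t).filter
        (fun tv => StrictMono tv),
      Real.exp (∑ k : Fin p, α (k.1 + 1) *
          (g (tv k) - if h : k.1 + 1 < p then g (tv ⟨k.1 + 1, h⟩) else g t)) *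
        ∏ k, mono x (tv k) (a k)
      = Real.exp (-(α p) * g t) * cs 0 (nestL ((List.ofFn y).reverse)) t :=
  weighted_iss_dynamic_programming_general d p hp x a g α hα0 y hy t
end

section
/- Coquantile features of the ISS of increments are invariant under stuttering: let x be a one-dimensional real time series of length T ≥ 1, let 1 ≤ t_0 ≤ T, and let y be the stuttered series of length T+1 with y_i = x_i for i ≤ t_0 and y_i = x_{i−1} for i > t_0. For 0 < q < 1 define, for a series z of length N, H(t, z) := Σ_{r=2}^{t} |z_r − z_{r−1}| and the coquantile ζ_q(z) := max{ t ∈ {1,…,N} : H(t, z) ≤ q · H(N, z) }. Then for every word w = [1^{c_1}]…[1^{c_p}] with positive integer exponents, Itsum_w(δy)_{ζ_q(y)} = Itsum_w(δx)_{ζ_q(x)}, where δz_1 := 0, δz_i := z_i − z_{i−1}, and Itsum_w(z)_t := Σ_{0 < t_1 < ⋯ < t_p ≤ t} z_{t_1}^{c_1} ⋯ z_{t_p}^{c_p}. -/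
/-- The increment series `δz` of a one-dimensional time series `z`: `δz_1 := 0`
and `δz_i := z_i − z_{i−1}` for `i ≥ 2`. -/
def delta1 (z : ℕ → ℝ) : ℕ → ℝ :=
  fun i => if 2 ≤ i then z i - z (i - 1) else 0

/-- The running iterated sum of a one-dimensional time series for a word
`[1^{c_1}]…[1^{c_p}]` given by its list of exponents:
`Itsum_w(z)_t = ∑_{s < t_1 < ⋯ < t_p ≤ t} z_{t_1}^{c_1} ⋯ z_{t_p}^{c_p}`
(with starting point `s`; the paper's `Itsum_w(z)_t` is `iss1 z w 0 t`). -/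
def iss1 (z : ℕ → ℝ) : List ℕ → ℕ → ℕ → ℝ
  | [], _, _ => 1
  | c :: w, s, t => ∑ i ∈ Finset.Ioc s t, z i ^ c * iss1 z w i t

/-- The cumulative sum of absolute increments `H(t, z) = Σ_{r=2}^{t} |z_r − z_{r−1}|`. -/
def Hcum (z : ℕ → ℝ) (t : ℕ) : ℝ :=
  ∑ r ∈ Finset.Icc 2 t, |z r - z (r - 1)|

/-- The coquantile `ζ_q(z) = max{ t ∈ {1,…,N} : H(t, z) ≤ q · H(N, z) }` of a series
`z` of length `N`. -/
noncomputable def coquantile (q : ℝ) (z : ℕ → ℝ) (N : ℕ) : ℕ :=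
  sSup {t : ℕ | 1 ≤ t ∧ t ≤ N ∧ Hcum z t ≤ q * Hcum z N}

lemma Hcum_nonneg (z : ℕ → ℝ) (t : ℕ) : 0 ≤ Hcum z t :=
  Finset.sum_nonneg fun _ _ => abs_nonneg _

lemma Hcum_one (z : ℕ → ℝ) : Hcum z 1 = 0 := by
  rw [Hcum, Finset.Icc_eq_empty (by omega), Finset.sum_empty]

lemma Hcum_succ (z : ℕ → ℝ) (t : ℕ) (ht : 1 ≤ t) :
    Hcum z (t + 1) = Hcum z t + |z (t + 1) - z t| := by
  rw [Hcum, Hcum, Finset.sum_Icc_succ_top (by omega)]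
  simp

/-- Zero-insertion invariance for iterated sums. -/
lemma iss1_insert (z z' : ℕ → ℝ) (m : ℕ) (hm : 1 ≤ m)
    (h1 : ∀ i, i < m → z' i = z i) (h2 : z' m = 0)
    (h3 : ∀ i, m < i → z' i = z (i - 1)) :
    ∀ c : List ℕ, (∀ e ∈ c, 1 ≤ e) → ∀ s t : ℕ,
      (t < m → iss1 z' c s t = iss1 z c s t) ∧
      (m ≤ s → iss1 z' c s t = iss1 z c (s - 1) (t - 1)) ∧
      (s < m → m ≤ t → iss1 z' c s t = iss1 z c s (t - 1)) := by
  obtain ⟨k, rfl⟩ : ∃ k, m = k + 1 := ⟨m - 1, by omega⟩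
  intro c
  induction c with
  | nil => intro _ s t; refine ⟨fun _ => rfl, fun _ => rfl, fun _ _ => rfl⟩
  | cons e w ih =>
    intro hc s t
    have he : 1 ≤ e := hc e (by simp)
    have hw : ∀ e' ∈ w, 1 ≤ e' := fun e' h => hc e' (by simp [h])
    refine ⟨?_, ?_, ?_⟩
    · intro htm
      simp only [iss1]
      refine Finset.sum_congr rfl fun i hi => ?_
      rw [Finset.mem_Ioc] at hi
      rw [h1 i (lt_of_le_of_lt hi.2 htm), (ih hw i t).1 htm]
    · intro hms
      simp only [iss1]
      refine Finset.sum_nbij' (fun a => a - 1) (fun a => a + 1) ?_ ?_ ?_ ?_ ?_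
      · intro a ha; simp only [Finset.mem_Ioc] at *; omega
      · intro a ha; simp only [Finset.mem_Ioc] at *; omega
      · intro a ha; simp only [Finset.mem_Ioc] at ha ⊢; omega
      · intro a ha; simp only [Finset.mem_Ioc] at ha ⊢; omega
      · intro a ha
        rw [Finset.mem_Ioc] at ha
        rw [h3 a (by omega), (ih hw a t).2.1 (by omega)]
    · intro hsm hmt
      simp only [iss1]
      rw [← Finset.sum_Ioc_consecutive _ (le_of_lt hsm) hmt]
      have e1 : (∑ i ∈ Finset.Ioc s (k + 1), z' i ^ e * iss1 z' w i t)
          = ∑ i ∈ Finset.Ioc s k, z i ^ e * iss1 z w i (t - 1) := by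
        rw [Finset.sum_Ioc_succ_top (by omega), h2, zero_pow (by omega), zero_mul, add_zero]
        refine Finset.sum_congr rfl fun i hi => ?_
        rw [Finset.mem_Ioc] at hi
        rw [h1 i (by omega), (ih hw i t).2.2 (by omega) hmt]
      have e2 : (∑ i ∈ Finset.Ioc (k + 1) t, z' i ^ e * iss1 z' w i t)
          = ∑ i ∈ Finset.Ioc k (t - 1), z i ^ e * iss1 z w i (t - 1) := by
        refine Finset.sum_nbij' (fun a => a - 1) (fun a => a + 1) ?_ ?_ ?_ ?_ ?_
        · intro a ha; simp only [Finset.mem_Ioc] at *; omega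
        · intro a ha; simp only [Finset.mem_Ioc] at *; omega
        · intro a ha; simp only [Finset.mem_Ioc] at ha ⊢; omega
        · intro a ha; simp only [Finset.mem_Ioc] at ha ⊢; omega
        · intro a ha
          rw [Finset.mem_Ioc] at ha
          rw [h3 a (by omega), (ih hw a t).2.1 (by omega)]
      rw [e1, e2, Finset.sum_Ioc_consecutive _ (by omega) (by omega)]

/-- Coquantile features of the ISS of increments are invariant under stuttering: if
`y` of length `T+1` is obtained from `x` of length `T ≥ 1` by stuttering (repeating
the value at position `t_0`, `1 ≤ t_0 ≤ T`, once), then for `0 < q < 1` and every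
word `[1^{c_1}]…[1^{c_p}]` with positive integer exponents,
`Itsum_w(δy)_{ζ_q(y)} = Itsum_w(δx)_{ζ_q(x)}`. -/
theorem coquantile_iss_increments_stuttering_invariant (T : ℕ) (hT : 1 ≤ T)
    (x y : ℕ → ℝ) (t₀ : ℕ) (ht₀1 : 1 ≤ t₀) (ht₀2 : t₀ ≤ T)
    (hy_le : ∀ i, i ≤ t₀ → y i = x i)
    (hy_gt : ∀ i, t₀ < i → y i = x (i - 1))
    (q : ℝ) (hq0 : 0 < q) (hq1 : q < 1)
    (c : List ℕ) (hc : ∀ e ∈ c, 1 ≤ e) :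
    iss1 (delta1 y) c 0 (coquantile q y (T + 1))
      = iss1 (delta1 x) c 0 (coquantile q x T) := by
  -- Hcum comparison
  have HA : ∀ t, t ≤ t₀ → Hcum y t = Hcum x t := by
    intro t ht
    refine Finset.sum_congr rfl fun r hr => ?_
    rw [Finset.mem_Icc] at hr
    rw [hy_le r (by omega), hy_le (r - 1) (by omega)]
  have HB : ∀ t, t₀ ≤ t → Hcum y (t + 1) = Hcum x t := by
    intro t ht
    induction t, ht using Nat.le_induction with
    | base =>
      rw [Hcum_succ y t₀ ht₀1, hy_gt (t₀ + 1) (by omega), hy_le t₀ le_rfl, HA t₀ le_rfl]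
      simp
    | succ n hn IH =>
      rw [Hcum_succ y (n + 1) (by omega), IH, hy_gt (n + 2) (by omega),
        hy_gt (n + 1) (by omega), Hcum_succ x n (by omega)]
      norm_num
  have HN : Hcum y (T + 1) = Hcum x T := HB T ht₀2
  -- the defining sets
  set Sx : Set ℕ := {t | 1 ≤ t ∧ t ≤ T ∧ Hcum x t ≤ q * Hcum x T} with hSx
  set Sy : Set ℕ := {t | 1 ≤ t ∧ t ≤ T + 1 ∧ Hcum y t ≤ q * Hcum y (T + 1)} with hSy
  have hqH : 0 ≤ q * Hcum x T := mul_nonneg hq0.le (Hcum_nonneg _ _)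
  have hSx_ne : Sx.Nonempty := ⟨1, le_rfl, hT, by rw [Hcum_one]; exact hqH⟩
  have hSx_bdd : BddAbove Sx := ⟨T, fun t ht => ht.2.1⟩
  have hSy_ne : Sy.Nonempty := ⟨1, le_rfl, by omega, by
    rw [Hcum_one, HN]; exact hqH⟩
  have hSy_bdd : BddAbove Sy := ⟨T + 1, fun t ht => ht.2.1⟩
  have hx_mem : coquantile q x T ∈ Sx := Nat.sSup_mem hSx_ne hSx_bdd
  obtain ⟨hx1, hx2, hx3⟩ := hx_mem
  have hx_ub : ∀ t, 1 ≤ t → t ≤ T → Hcum x t ≤ q * Hcum x T → t ≤ coquantile q x T :=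
    fun t h1 h2 h3 => le_csSup hSx_bdd ⟨h1, h2, h3⟩
  set ζ := coquantile q x T with hζ
  -- increments relation
  have d1 : ∀ i, i < t₀ + 1 → delta1 y i = delta1 x i := by
    intro i hi
    unfold delta1
    by_cases h2i : 2 ≤ i
    · rw [if_pos h2i, if_pos h2i, hy_le i (by omega), hy_le (i - 1) (by omega)]
    · rw [if_neg h2i, if_neg h2i]
  have d2 : delta1 y (t₀ + 1) = 0 := by
    unfold delta1
    rw [if_pos (by omega), hy_gt (t₀ + 1) (by omega)]
    simp [hy_le t₀ le_rfl]
  have d3 : ∀ i, t₀ + 1 < i → delta1 y i = delta1 x (i - 1) := by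
    intro i hi
    unfold delta1
    rw [if_pos (by omega), if_pos (by omega), hy_gt i (by omega), hy_gt (i - 1) (by omega)]
  have key := iss1_insert (delta1 x) (delta1 y) (t₀ + 1) (by omega) d1 d2 d3 c hc
  by_cases hcase : t₀ ≤ ζ
  · -- coquantile of y is ζ + 1
    have hζy : coquantile q y (T + 1) = ζ + 1 := by
      refine le_antisymm (csSup_le hSy_ne ?_) (le_csSup hSy_bdd ?_)
      · rintro t ⟨ht1, ht2, ht3⟩
        by_contra hcon
        push_neg at hcon
        have hHt : Hcum y t = Hcum x (t - 1) := by
          have := HB (t - 1) (by omega)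
          rwa [show t - 1 + 1 = t from by omega] at this
        have : t - 1 ≤ ζ := hx_ub (t - 1) (by omega) (by omega) (by rw [← hHt, ← HN]; exact ht3)
        omega
      · refine ⟨by omega, by omega, ?_⟩
        rw [HB ζ hcase, HN]
        exact hx3
    rw [hζy, (key 0 (ζ + 1)).2.2 (by omega) (by omega)]
    norm_num
  · -- ζ < t₀ ; coquantile of y is ζ
    push_neg at hcase
    have hζy : coquantile q y (T + 1) = ζ := by
      refine le_antisymm (csSup_le hSy_ne ?_) (le_csSup hSy_bdd ?_)
      · rintro t ⟨ht1, ht2, ht3⟩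
        by_contra hcon
        push_neg at hcon
        by_cases htt : t ≤ t₀
        · have : t ≤ ζ := hx_ub t ht1 (by omega) (by rw [← HA t htt, ← HN]; exact ht3)
          omega
        · push_neg at htt
          have hHt : Hcum y t = Hcum x (t - 1) := by
            have := HB (t - 1) (by omega)
            rwa [show t - 1 + 1 = t from by omega] at this
          have : t - 1 ≤ ζ :=
            hx_ub (t - 1) (by omega) (by omega) (by rw [← hHt, ← HN]; exact ht3)
          omega
      · exact ⟨hx1, by omega, by rw [HA ζ (by omega), HN]; exact hx3⟩
    rw [hζy]
    exact (key 0 ζ).1 (by omega)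
end
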